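/- Let n ≥ 1 and s ≥ 1 be natural numbers, let R and Σ be symmetric positive definite s×s real matrices, let E be the real matrix of size (Fin n × Fin s) × Fin s defined by E((i,j), k) = 1 if j = k and 0 otherwise, and set W = J_n ⊗ R + I_n ⊗ Σ. Then W · ( I_n ⊗ Σ⁻¹ − E · Σ⁻¹ · (R⁻¹ + n·Σ⁻¹)⁻¹ · Σ⁻¹ · Eᵀ ) equals the identity matrix indexed by Fin n × Fin s; in particular W is invertible with W⁻¹ = I_n ⊗ Σ⁻¹ − E · Σ⁻¹ · (R⁻¹ + n·Σ⁻¹)⁻¹ · Σ⁻¹ · Eᵀ. -/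

import Mathlib

open Matrix
open scoped Kronecker

/-! With `J` the all-ones `n × n` matrix, `E X Eᵀ = J ⊗ X`, so the candidate inverse is
`1 ⊗ S⁻¹ - J ⊗ B` with `B = S⁻¹ M⁻¹ S⁻¹`, `M = R⁻¹ + n S⁻¹`. Since `J² = n J`, multiplying out
leaves `1 ⊗ 1 + J ⊗ (R S⁻¹ - (n R + S) B)`, and `(n R + S) S⁻¹ = R M` makes the second term
vanish. -/

namespace Matrix

variable {ι κ : Type*} [Fintype κ] [DecidableEq κ]

lemma of_one_mul_of_one {α : Type*} [Fintype ι] [NonAssocSemiring α] :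
    (of fun _ _ => 1 : Matrix ι ι α) * of (fun _ _ => 1) =
      (Fintype.card ι : α) • of fun _ _ => 1 := by
  ext i k
  simp [mul_apply]

lemma of_ite_snd_mul_mul_transpose {α : Type*} [NonAssocSemiring α] (X : Matrix κ κ α) :
    (of fun p k => if p.2 = k then 1 else 0 : Matrix (ι × κ) κ α) * X *
        (of fun p k => if p.2 = k then 1 else 0 : Matrix (ι × κ) κ α)ᵀ =
      (of fun _ _ => 1 : Matrix ι ι α) ⊗ₖ X := by
  ext ⟨i, j⟩ ⟨i', j'⟩
  simp [mul_apply]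

variable {K : Type*} [CommRing K]

lemma smul_add_mul_inv {R S : Matrix κ κ K} (c : K) (hR : IsUnit R.det) (hS : IsUnit S.det) :
    (c • R + S) * S⁻¹ = R * (R⁻¹ + c • S⁻¹) := by
  rw [Matrix.add_mul, Matrix.mul_add, mul_nonsing_inv _ hR, mul_nonsing_inv _ hS,
    Matrix.smul_mul, Matrix.mul_smul, add_comm]

theorem ones_kronecker_add_one_kronecker_mul_eq_one [Fintype ι] [DecidableEq ι]
    {R S : Matrix κ κ K} (hR : IsUnit R.det) (hS : IsUnit S.det)
    (hM : IsUnit (R⁻¹ + (Fintype.card ι : K) • S⁻¹).det) :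
    ((of fun _ _ => 1 : Matrix ι ι K) ⊗ₖ R + (1 : Matrix ι ι K) ⊗ₖ S) *
        ((1 : Matrix ι ι K) ⊗ₖ S⁻¹ -
          (of fun _ _ => 1 : Matrix ι ι K) ⊗ₖ
            (S⁻¹ * (R⁻¹ + (Fintype.card ι : K) • S⁻¹)⁻¹ * S⁻¹)) = 1 := by
  set M := R⁻¹ + (Fintype.card ι : K) • S⁻¹
  have hcorr : (Fintype.card ι : K) • (R * (S⁻¹ * M⁻¹ * S⁻¹)) + S * (S⁻¹ * M⁻¹ * S⁻¹) =
      R * S⁻¹ := by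
    rw [← Matrix.smul_mul, ← Matrix.add_mul, ← Matrix.mul_assoc, ← Matrix.mul_assoc,
      smul_add_mul_inv _ hR hS, Matrix.mul_assoc R, mul_nonsing_inv _ hM, Matrix.mul_one]
  rw [Matrix.mul_sub, Matrix.add_mul, Matrix.add_mul, ← mul_kronecker_mul, ← mul_kronecker_mul,
    ← mul_kronecker_mul, ← mul_kronecker_mul, of_one_mul_of_one, Matrix.mul_one, Matrix.one_mul,
    Matrix.one_mul, mul_nonsing_inv _ hS, smul_kronecker, ← kronecker_smul, ← kronecker_add,
    hcorr, one_kronecker_one]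
  abel

end Matrix

theorem stmt6_general (n s : ℕ)
    (R Sig : Matrix (Fin s) (Fin s) ℝ) (hR : R.PosDef) (hSig : Sig.PosDef) :
    let E : Matrix (Fin n × Fin s) (Fin s) ℝ :=
      Matrix.of fun p k => if p.2 = k then 1 else 0
    let W : Matrix (Fin n × Fin s) (Fin n × Fin s) ℝ :=
      (Matrix.of fun _ _ => (1 : ℝ) : Matrix (Fin n) (Fin n) ℝ) ⊗ₖ R
        + (1 : Matrix (Fin n) (Fin n) ℝ) ⊗ₖ Sig
    let Winv : Matrix (Fin n × Fin s) (Fin n × Fin s) ℝ :=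
      (1 : Matrix (Fin n) (Fin n) ℝ) ⊗ₖ Sig⁻¹
        - E * Sig⁻¹ * (R⁻¹ + (n : ℝ) • Sig⁻¹)⁻¹ * Sig⁻¹ * Eᵀ
    W * Winv = 1 ∧ IsUnit W.det ∧ W⁻¹ = Winv := by
  intro E W Winv
  have isUnit_det {A : Matrix (Fin s) (Fin s) ℝ} (hA : A.PosDef) : IsUnit A.det :=
    (isUnit_iff_isUnit_det A).mp hA.isUnit
  have hM : (R⁻¹ + (n : ℝ) • Sig⁻¹).PosDef :=
    hR.inv.add_posSemidef (hSig.inv.posSemidef.smul n.cast_nonneg)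
  have hWinv : W * Winv = 1 := by
    have h := ones_kronecker_add_one_kronecker_mul_eq_one (ι := Fin n) (isUnit_det hR)
      (isUnit_det hSig) (by simpa using isUnit_det hM)
    rwa [Fintype.card_fin, ← of_ite_snd_mul_mul_transpose (Sig⁻¹ * _ * Sig⁻¹), ← Matrix.mul_assoc,
      ← Matrix.mul_assoc] at h
  exact ⟨hWinv, isUnit_det_of_right_inverse hWinv, inv_eq_right_inv hWinv⟩

theorem stmt6 (n s : ℕ) (hn : 1 ≤ n) (hs : 1 ≤ s)
    (R Sig : Matrix (Fin s) (Fin s) ℝ) (hR : R.PosDef) (hSig : Sig.PosDef) :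
    let E : Matrix (Fin n × Fin s) (Fin s) ℝ :=
      Matrix.of fun p k => if p.2 = k then 1 else 0
    let W : Matrix (Fin n × Fin s) (Fin n × Fin s) ℝ :=
      (Matrix.of fun _ _ => (1 : ℝ) : Matrix (Fin n) (Fin n) ℝ) ⊗ₖ R
        + (1 : Matrix (Fin n) (Fin n) ℝ) ⊗ₖ Sig
    let Winv : Matrix (Fin n × Fin s) (Fin n × Fin s) ℝ :=
      (1 : Matrix (Fin n) (Fin n) ℝ) ⊗ₖ Sig⁻¹
        - E * Sig⁻¹ * (R⁻¹ + (n : ℝ) • Sig⁻¹)⁻¹ * Sig⁻¹ * Eᵀ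
    W * Winv = 1 ∧ IsUnit W.det ∧ W⁻¹ = Winv :=
  stmt6_general n s R Sig hR hSig
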